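/- Let k, p ≥ 2 and let τ ∈ 𝒯(𝓛_p) be a type realized by some flat set of cardinality p (i.e. τ ∈ 𝒯_Fl[k,p]). Then the restriction of R_p to the flat sets of cardinality p and type τ is a bijection onto W(k, 𝓛_p, τ), the set of words over [k]∪𝓛_p of type τ. -/

import Mathlib

/-- The word representation `R_p(F)` of a flat set `F` of cardinality `p`:
order `F` lexicographically as `t₀ <lex … <lex t_{p−1}`; for each coordinate `i` form the
column `āᵢ = (a_{i,0},…,a_{i,p−1})`; output the letter `a ∈ [k]` (`Sum.inl`) if the column
is constant with value `a`, and the column itself (`Sum.inr`, a letter of `𝓛_p`) otherwise. -/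
def Rp (k p : ℕ) (hk : 0 < k) (hp : 0 < p) (F : Finset (List (Fin k))) :
    List (Fin k ⊕ (Fin p → Fin k)) :=
  (List.range ((F.sort (· ≤ ·)).headD []).length).map fun i =>
    let row : Fin p → Fin k := fun j => ((F.sort (· ≤ ·)).getD (j : ℕ) []).getD i ⟨0, hk⟩
    if ∀ j, row j = row ⟨0, hp⟩ then Sum.inl (row ⟨0, hp⟩) else Sum.inr row

/-- The type of a flat set `F` of cardinality `p`: the type of its word representation
`R_p(F)` (erase the letters of `[k]`, collapse runs of equal letters of `𝓛_p`). -/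
def flatType (k p : ℕ) (hk : 0 < k) (hp : 0 < p) (F : Finset (List (Fin k))) :
    List (Fin p → Fin k) :=
  ((Rp k p hk hp F).filterMap Sum.getRight?).destutter (· ≠ ·)

/-!
Reading a word `u` over `[k] ∪ 𝓛_p` letter by letter produces `p` rows, and `R_p` is inverted by
taking the set of these rows. This is a flat set of cardinality `p` mapping back to `u` exactly
when the rows are strictly increasing in the lexicographic order. Two rows `j < j'` are compared
at the first letter of `𝓛_p` separating them, and finding that letter is unaffected by erasing
the letters of `[k]` and collapsing runs; so the comparison depends only on the type of `u`.
Since the type `τ` is realized by a flat set, whose rows are increasing, every word of type `τ`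
has increasing rows.
-/

namespace List

theorem find?_destutter'_ne {α : Type*} [DecidableEq α] (q : α → Bool) :
    ∀ (l : List α) (a : α), (l.destutter' (· ≠ ·) a).find? q = (a :: l).find? q
  | [], _ => rfl
  | b :: l, a => by
    rw [destutter'_cons]
    by_cases hab : a = b
    · subst hab
      rw [if_neg (by simp), find?_destutter'_ne q l a, find?_cons, find?_cons, find?_cons]
      cases q a <;> rfl
    · rw [if_pos hab, find?_cons, find?_cons, find?_destutter'_ne q l b]

theorem find?_destutter_ne {α : Type*} [DecidableEq α] (q : α → Bool) (l : List α) :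
    (l.destutter (· ≠ ·)).find? q = l.find? q := by
  cases l with
  | nil => rfl
  | cons a l => rw [destutter_cons', find?_destutter'_ne]

end List

namespace FlatSet

variable {k p : ℕ}

/-- A letter `a ∈ [k]` stands for the constant column `a`. -/
def letterEntry (j : Fin p) : Fin k ⊕ (Fin p → Fin k) → Fin k :=
  Sum.elim id (· j)

@[simp]
theorem letterEntry_inl (j : Fin p) (a : Fin k) :
    letterEntry j (.inl a : Fin k ⊕ (Fin p → Fin k)) = a :=
  rfl

@[simp]
theorem letterEntry_inr (j : Fin p) (f : Fin p → Fin k) :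
    letterEntry j (.inr f : Fin k ⊕ (Fin p → Fin k)) = f j :=
  rfl

def wordRow (u : List (Fin k ⊕ (Fin p → Fin k))) (j : Fin p) : List (Fin k) :=
  u.map (letterEntry j)

def wordType (u : List (Fin k ⊕ (Fin p → Fin k))) : List (Fin p → Fin k) :=
  (u.filterMap Sum.getRight?).destutter (· ≠ ·)

def ofWord (u : List (Fin k ⊕ (Fin p → Fin k))) : Finset (List (Fin k)) :=
  Finset.univ.image (wordRow u)

def column (hk : 0 < k) (F : Finset (List (Fin k))) (i : ℕ) : Fin p → Fin k :=
  fun j => ((F.sort (· ≤ ·)).getD j []).getD i ⟨0, hk⟩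

def encodeColumn (hp : 0 < p) (c : Fin p → Fin k) : Fin k ⊕ (Fin p → Fin k) :=
  if ∀ j, c j = c ⟨0, hp⟩ then .inl (c ⟨0, hp⟩) else .inr c

theorem Rp_eq_map_encodeColumn (hk : 0 < k) (hp : 0 < p) (F : Finset (List (Fin k))) :
    Rp k p hk hp F = (List.range ((F.sort (· ≤ ·)).headD []).length).map
      fun i => encodeColumn hp (column hk F i) :=
  rfl

theorem flatType_eq_wordType_Rp (hk : 0 < k) (hp : 0 < p) (F : Finset (List (Fin k))) :
    flatType k p hk hp F = wordType (Rp k p hk hp F) :=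
  rfl

section Letters

variable (hp : 0 < p)

theorem letterEntry_encodeColumn (c : Fin p → Fin k) (j : Fin p) :
    letterEntry j (encodeColumn hp c) = c j := by
  unfold encodeColumn
  split_ifs with hc
  · exact (hc j).symm
  · rfl

theorem encodeColumn_letterEntry {x : Fin k ⊕ (Fin p → Fin k)}
    (hx : ∀ f, x = .inr f → ¬ ∃ a : Fin k, ∀ j, f j = a) :
    encodeColumn hp (fun j => letterEntry j x) = x := by
  rcases x with a | f
  · simp [encodeColumn]
  · have hf : ¬ ∀ j, f j = f ⟨0, hp⟩ := fun h => hx f rfl ⟨_, h⟩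
    simp [encodeColumn, hf]

theorem not_const_of_encodeColumn_eq_inr {c f : Fin p → Fin k} (h : encodeColumn hp c = .inr f) :
    ¬ ∃ a : Fin k, ∀ j, f j = a := by
  rintro ⟨a, ha⟩
  unfold encodeColumn at h
  split_ifs at h with hc
  cases h
  exact hc fun j => (ha j).trans (ha _).symm

end Letters

section Rows

theorem length_wordRow (u : List (Fin k ⊕ (Fin p → Fin k))) (j : Fin p) :
    (wordRow u j).length = u.length :=
  List.length_map _

/-- Letters of `[k]` contribute equal entries to all rows, so two rows are first separated by a
letter of `𝓛_p`. -/
theorem wordRow_lt_wordRow_iff (u : List (Fin k ⊕ (Fin p → Fin k))) (j j' : Fin p) :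
    wordRow u j < wordRow u j' ↔
      ∃ f, (u.filterMap Sum.getRight?).find? (fun f => f j ≠ f j') = some f ∧ f j < f j' := by
  induction u with
  | nil => simp [wordRow]
  | cons x u ih =>
    rcases x with a | f
    · simpa [wordRow] using ih
    · by_cases hf : f j = f j'
      · simpa [wordRow, hf] using ih
      · simp [wordRow, hf, List.cons_lt_cons_iff]

theorem wordRow_lt_wordRow_iff_find?_wordType (u : List (Fin k ⊕ (Fin p → Fin k))) (j j' : Fin p) :
    wordRow u j < wordRow u j' ↔
      ∃ f, (wordType u).find? (fun f => f j ≠ f j') = some f ∧ f j < f j' := by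
  rw [wordRow_lt_wordRow_iff, wordType, List.find?_destutter_ne]

theorem strictMono_wordRow_of_wordType_eq {u v : List (Fin k ⊕ (Fin p → Fin k))}
    (huv : wordType u = wordType v) (hv : StrictMono (wordRow v)) : StrictMono (wordRow u) :=
  fun j j' hjj' => (wordRow_lt_wordRow_iff_find?_wordType u j j').2 <| huv ▸
    (wordRow_lt_wordRow_iff_find?_wordType v j j').1 (hv hjj')

end Rows

section FlatSets

variable {hk : 0 < k} {hp : 0 < p} {F : Finset (List (Fin k))} {n : ℕ}
  (hcard : F.card = p) (hlen : ∀ w ∈ F, w.length = n)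
include hcard hlen

theorem wordRow_Rp (j : Fin p) : wordRow (Rp k p hk hp F) j = (F.sort (· ≤ ·)).getD j [] := by
  have hslen : (F.sort (· ≤ ·)).length = p := by rw [Finset.length_sort, hcard]
  have hlen_sort : ∀ j' : Fin p, ((F.sort (· ≤ ·)).getD j' []).length = n := fun j' => by
    rw [List.getD_eq_getElem _ _ (hslen ▸ j'.isLt)]
    exact hlen _ ((Finset.mem_sort _).1 (List.getElem_mem _))
  have hhead : ((F.sort (· ≤ ·)).headD []).length = n := by
    simpa [List.headD_eq_head?_getD, List.head?_eq_getElem?, hslen, hp] using hlen_sort ⟨0, hp⟩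
  apply List.ext_getElem
  · rw [length_wordRow, Rp_eq_map_encodeColumn, List.length_map, List.length_range, hhead,
      hlen_sort]
  · intro i hi _
    have hin : i < n := by
      rwa [length_wordRow, Rp_eq_map_encodeColumn, List.length_map, List.length_range,
        hhead] at hi
    simp only [wordRow, Rp_eq_map_encodeColumn, List.getElem_map, List.getElem_range,
      letterEntry_encodeColumn, column]
    exact List.getD_eq_getElem _ _ (by rw [hlen_sort j]; exact hin)

theorem strictMono_wordRow_Rp : StrictMono (wordRow (Rp k p hk hp F)) := by
  have hslen : (F.sort (· ≤ ·)).length = p := by rw [Finset.length_sort, hcard]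
  intro j j' hjj'
  rw [wordRow_Rp hcard hlen, wordRow_Rp hcard hlen, List.getD_eq_getElem _ _ (hslen ▸ j.isLt),
    List.getD_eq_getElem _ _ (hslen ▸ j'.isLt)]
  exact (Finset.sortedLT_sort F).strictMono_get (a := ⟨j, _⟩) (b := ⟨j', _⟩) hjj'

theorem ofWord_Rp : ofWord (Rp k p hk hp F) = F := by
  have hslen : (F.sort (· ≤ ·)).length = p := by rw [Finset.length_sort, hcard]
  ext w
  simp only [ofWord, Finset.mem_image, Finset.mem_univ, true_and, wordRow_Rp hcard hlen]
  rw [← Finset.mem_sort (· ≤ ·), List.mem_iff_getElem]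
  constructor
  · rintro ⟨j, rfl⟩
    exact ⟨j, hslen ▸ j.isLt, (List.getD_eq_getElem _ _ _).symm⟩
  · rintro ⟨j, hj, rfl⟩
    exact ⟨⟨j, hslen ▸ hj⟩, List.getD_eq_getElem _ _ _⟩

end FlatSets

section Words

variable {u : List (Fin k ⊕ (Fin p → Fin k))} (hu : StrictMono (wordRow u))
include hu

theorem card_ofWord : (ofWord u).card = p := by
  rw [ofWord, Finset.card_image_of_injective _ hu.injective, Finset.card_univ, Fintype.card_fin]

omit hu in
theorem length_of_mem_ofWord {w : List (Fin k)} (hw : w ∈ ofWord u) : w.length = u.length := by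
  obtain ⟨j, -, rfl⟩ := Finset.mem_image.1 hw
  exact length_wordRow u j

theorem sort_ofWord : (ofWord u).sort (· ≤ ·) = List.ofFn (wordRow u) :=
  (Finset.sortedLT_sort _).eq_of_mem_iff (List.sortedLT_ofFn_iff.2 hu) fun w => by
    simp [ofWord, List.mem_ofFn]

theorem Rp_ofWord (hk : 0 < k) (hp : 0 < p) (hletters : ∀ x ∈ u, ∀ f, x = .inr f →
      ¬ ∃ a : Fin k, ∀ j, f j = a) :
    Rp k p hk hp (ofWord u) = u := by
  have hhead : ((ofWord u).sort (· ≤ ·)).headD [] = wordRow u ⟨0, hp⟩ := by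
    simp [sort_ofWord hu, List.headD_eq_head?_getD, List.head?_eq_getElem?, hp]
  have hcolumn : ∀ (i : ℕ) (hi : i < u.length),
      column hk (ofWord u) i = fun j => letterEntry j u[i] := fun i hi => by
    funext j
    rw [column, sort_ofWord hu, List.getD_eq_getElem (List.ofFn _) _ (by simp),
      List.getElem_ofFn, List.getD_eq_getElem _ _ (by rw [length_wordRow]; exact hi)]
    simp [wordRow]
  rw [Rp_eq_map_encodeColumn]
  apply List.ext_getElem
  · rw [List.length_map, List.length_range, hhead, length_wordRow]
  · intro i _ hi
    simp only [List.getElem_map, List.getElem_range, hcolumn i hi]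
    exact encodeColumn_letterEntry hp (hletters _ (List.getElem_mem hi))

end Words

end FlatSet

open FlatSet in
/-- For `k, p ≥ 2` and a type `τ` of `W(k,𝓛_p)` realized by some flat
set of cardinality `p`, the restriction of `R_p` to the flat sets of cardinality `p` and
type `τ` is a bijection onto `W(k,𝓛_p,τ)`, the set of words over `[k] ∪ 𝓛_p` of type `τ`.
(Letters of `𝓛_p = [k]^p ∖ Δ([k]^p)` are the nonconstant `f : Fin p → Fin k`.) -/
theorem stmt_10 (k p : ℕ) (hk : 2 ≤ k) (hp : 2 ≤ p)
    (τ : List (Fin p → Fin k))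
    (hreal : ∃ F : Finset (List (Fin k)),
      (F.card = p ∧ ∃ n, ∀ w ∈ F, w.length = n) ∧
      flatType k p (by omega) (by omega) F = τ) :
    Set.BijOn (Rp k p (by omega) (by omega))
      {F : Finset (List (Fin k)) |
        (F.card = p ∧ ∃ n, ∀ w ∈ F, w.length = n) ∧
        flatType k p (by omega) (by omega) F = τ}
      {u : List (Fin k ⊕ (Fin p → Fin k)) |
        (∀ x ∈ u, ∀ f : Fin p → Fin k, x = Sum.inr f → ¬ ∃ a : Fin k, ∀ j, f j = a) ∧
        (u.filterMap Sum.getRight?).destutter (· ≠ ·) = τ} := by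
  obtain ⟨F₀, ⟨hcard₀, n₀, hlen₀⟩, hτ₀⟩ := hreal
  have hmono : ∀ u, wordType u = τ → StrictMono (wordRow u) := fun u hu =>
    strictMono_wordRow_of_wordType_eq (hu.trans hτ₀.symm) (strictMono_wordRow_Rp hcard₀ hlen₀)
  refine Set.InvOn.bijOn (f' := ofWord) ⟨?_, ?_⟩ ?_ ?_
  · rintro F ⟨⟨hcard, n, hlen⟩, -⟩
    exact ofWord_Rp hcard hlen
  · rintro u ⟨hletters, hτ⟩
    exact Rp_ofWord (hmono u hτ) _ _ hletters
  · rintro F ⟨-, hτ⟩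
    refine ⟨fun x hx f hxf => ?_, hτ⟩
    obtain ⟨i, -, rfl⟩ := List.mem_map.1 (Rp_eq_map_encodeColumn _ _ F ▸ hx)
    exact not_const_of_encodeColumn_eq_inr _ hxf
  · rintro u ⟨hletters, hτ⟩
    refine ⟨⟨card_ofWord (hmono u hτ), u.length, fun w => length_of_mem_ofWord⟩, ?_⟩
    rw [flatType_eq_wordType_Rp, Rp_ofWord (hmono u hτ) _ _ hletters]
    exact hτ
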